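/- arXiv:1405.3721 — 2 statements merged into one kernel-verified Lean document; each statement's English description precedes it below -/
import Mathlib

section
/- Let d ≥ 1 and let F ∈ ℂ[x_0,x_1] be a non-zero binary form of degree d. Then rk(F) ≤ d, i.e. F can be written as a sum of at most d d-th powers of linear forms in x_0,x_1. -/
open MvPolynomial

/-- The Waring rank of a form `P` of degree `d`: the least `r` such that
`P = L₁^d + ⋯ + L_r^d` for some linear forms `L i`. -/
noncomputable def waringRank {σ : Type*} (d : ℕ) (P : MvPolynomial σ ℂ) : ℕ :=
  sInf {r : ℕ | ∃ L : Fin r → MvPolynomial σ ℂ,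
    (∀ i, (L i).IsHomogeneous 1) ∧ P = ∑ i, (L i) ^ d}

/-!
After an invertible linear change of coordinates we may assume `F(1,0) ≠ 0` and `F(0,1) ≠ 0`.
Write `F = ∑ e_j x^(d-j) y^j`, choose `r` with `r^d = e_d / e_0` and a primitive `d`-th root of
unity `ζ`. Averaging `ζ^(-kj) (x + ζ^k r y)^d` over `k < d` isolates `x^(d-j) y^j` for `0 < j < d`
and `x^d + r^d y^d` for `j = 0`, so `F` is a linear combination of the `d` powers
`(x + ζ^k r y)^d`; over `ℂ` each coefficient is itself a `d`-th power.
-/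

open Finset

namespace MvPolynomial

section LinearSubst

variable {R : Type*} [CommSemiring R] {σ τ υ : Type*} [Fintype τ]

noncomputable def linearSubst (M : Matrix σ τ R) (i : σ) : MvPolynomial τ R :=
  ∑ j, C (M i j) * X j

theorem isHomogeneous_linearSubst (M : Matrix σ τ R) (i : σ) :
    (linearSubst M i).IsHomogeneous 1 :=
  IsHomogeneous.sum _ _ _ fun _ _ => isHomogeneous_C_mul_X _ _

omit [Fintype τ] in
theorem linearSubst_one [Fintype σ] [DecidableEq σ] : linearSubst (1 : Matrix σ σ R) = X := by
  ext1 i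
  simp [linearSubst, Matrix.one_apply]

theorem bind₁_linearSubst_comp [Fintype σ] (N : Matrix υ σ R) (M : Matrix σ τ R) (i : υ) :
    bind₁ (linearSubst M) (linearSubst N i) = linearSubst (N * M) i := by
  simp only [linearSubst, map_sum, map_mul, bind₁_C_right, bind₁_X_right, Matrix.mul_apply,
    Finset.mul_sum, ← mul_assoc, Finset.sum_mul]
  exact Finset.sum_comm

theorem bind₁_linearSubst_bind₁_linearSubst [Fintype σ] (N : Matrix υ σ R) (M : Matrix σ τ R)
    (p : MvPolynomial υ R) :
    bind₁ (linearSubst M) (bind₁ (linearSubst N) p) = bind₁ (linearSubst (N * M)) p := by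
  rw [bind₁_bind₁]
  simp only [bind₁_linearSubst_comp]

theorem eval_bind₁_linearSubst (M : Matrix σ τ R) (x : τ → R) (p : MvPolynomial σ R) :
    eval x (bind₁ (linearSubst M) p) = eval (M.mulVec x) p := by
  rw [eval, eval₂Hom_bind₁, ← eval]
  congr 2
  funext i
  simp [linearSubst, Matrix.mulVec, dotProduct]

end LinearSubst

theorem exists_isUnit_det_eval_col_ne_zero {K σ : Type*} [Field K] [Infinite K]
    [Fintype σ] [DecidableEq σ] {F : MvPolynomial σ K} (hF : F ≠ 0) :
    ∃ N : Matrix σ σ K, IsUnit N.det ∧ ∀ j, eval (N.col j) F ≠ 0 := by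
  set Q : MvPolynomial (σ × σ) K :=
    (Matrix.mvPolynomialX σ σ K).det * ∏ j, rename (fun i => (i, j)) F
  have hQ : Q ≠ 0 := mul_ne_zero (Matrix.det_mvPolynomialX_ne_zero σ K) <|
    prod_ne_zero_iff.mpr fun j _ =>
      (map_ne_zero_iff _ (rename_injective _ fun _ _ h => (Prod.mk.inj h).1)).mpr hF
  obtain ⟨s, hs⟩ : ∃ s, eval s Q ≠ 0 := by
    by_contra! h
    exact hQ (MvPolynomial.funext fun s => by rw [h s, map_zero])
  rw [map_mul, Matrix.eval_det_mvPolynomialX, map_prod] at hs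
  refine ⟨Matrix.of fun i j => s (i, j), isUnit_iff_ne_zero.mpr (left_ne_zero_of_mul hs),
    fun j => ?_⟩
  have := prod_ne_zero_iff.mp (right_ne_zero_of_mul hs) j (mem_univ j)
  rwa [eval_rename] at this

theorem IsHomogeneous.eq_sum_binary {R : Type*} [CommSemiring R] {F : MvPolynomial (Fin 2) R}
    {d : ℕ} (hF : F.IsHomogeneous d) :
    F = ∑ j ∈ range (d + 1),
      coeff (Finsupp.single 0 (d - j) + Finsupp.single 1 j) F • (X 0 ^ (d - j) * X 1 ^ j) := by
  set ν : ℕ → Fin 2 →₀ ℕ := fun j => Finsupp.single 0 (d - j) + Finsupp.single 1 j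
  have hν : Set.InjOn ν (range (d + 1)) := fun i _ j _ h => by
    simpa [ν] using DFunLike.congr_fun h 1
  have hsupp : F.support ⊆ (range (d + 1)).image ν := fun μ hμ => by
    have hdeg : μ 0 + μ 1 = d := by
      rw [hF.degree_eq_sum_deg_support hμ, ← Finsupp.degree_apply, Finsupp.degree_eq_sum,
        Fin.sum_univ_two]
    refine mem_image.mpr ⟨μ 1, mem_range.mpr (by omega), ?_⟩
    ext i
    fin_cases i <;> simp [ν]
    omega
  conv_lhs => rw [F.as_sum, sum_subset hsupp fun μ _ hμ => by
    rw [notMem_support_iff.mp hμ, monomial_zero]]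
  rw [sum_image hν]
  refine sum_congr rfl fun j _ => ?_
  rw [X_pow_eq_monomial, X_pow_eq_monomial, monomial_mul, one_mul, smul_monomial, smul_eq_mul,
    mul_one]

theorem IsHomogeneous.eval_single_zero_one {R : Type*} [CommSemiring R]
    {F : MvPolynomial (Fin 2) R} {d : ℕ} (hF : F.IsHomogeneous d) :
    eval (Pi.single 0 1) F = coeff (Finsupp.single 0 d) F := by
  conv_lhs => rw [hF.eq_sum_binary]
  rw [map_sum, sum_eq_single 0]
  · simp
  · intro j _ hj; simp [hj]
  · simp

theorem IsHomogeneous.eval_single_one_one {R : Type*} [CommSemiring R]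
    {F : MvPolynomial (Fin 2) R} {d : ℕ} (hF : F.IsHomogeneous d) :
    eval (Pi.single 1 1) F = coeff (Finsupp.single 1 d) F := by
  conv_lhs => rw [hF.eq_sum_binary]
  rw [map_sum, sum_eq_single d]
  · simp
  · intro j hj hjd
    have : d - j ≠ 0 := by have := mem_range.mp hj; omega
    simp [this]
  · simp

end MvPolynomial

theorem Nat.eq_of_dvd_of_pos_of_lt_two_mul {d n : ℕ} (h : d ∣ n) (hn : 0 < n) (hn' : n < 2 * d) :
    n = d := by
  obtain ⟨q, rfl⟩ := h
  have hq : q < 2 := Nat.lt_of_mul_lt_mul_left (a := d) (by linarith)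
  interval_cases q <;> simp_all

namespace IsPrimitiveRoot

variable {K : Type*} [CommRing K] [IsDomain K] {ζ : K} {d : ℕ}

omit [IsDomain K] in
theorem sum_pow_pow_of_dvd (hζ : IsPrimitiveRoot ζ d) {n : ℕ} (hn : d ∣ n) :
    ∑ k ∈ range d, (ζ ^ n) ^ k = d := by
  simp [(hζ.pow_eq_one_iff_dvd n).mpr hn]

theorem sum_pow_pow_of_not_dvd (hζ : IsPrimitiveRoot ζ d) {n : ℕ} (hn : ¬d ∣ n) :
    ∑ k ∈ range d, (ζ ^ n) ^ k = 0 := by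
  have h1 : ζ ^ n - 1 ≠ 0 := sub_ne_zero.mpr fun h => hn ((hζ.pow_eq_one_iff_dvd n).mp h)
  have h2 : (∑ k ∈ range d, (ζ ^ n) ^ k) * (ζ ^ n - 1) = 0 := by
    rw [geom_sum_mul, ← pow_mul, mul_comm, pow_mul, hζ.pow_eq_one, one_pow, sub_self]
  exact (mul_eq_zero.mp h2).resolve_right h1

variable {A : Type*} [CommRing A] [Algebra K A]

-- `(ζ ^ k) ^ (d - j)` stands for `ζ ^ (-k * j)`.
theorem sum_pow_smul_add_smul_pow (hζ : IsPrimitiveRoot ζ d) (x y : A) {j : ℕ} (hj : j < d) :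
    ∑ k ∈ range d, (ζ ^ k) ^ (d - j) • (x + ζ ^ k • y) ^ d =
      ((d.choose j * d : ℕ) : K) • (x ^ (d - j) * y ^ j) +
        if j = 0 then (d : K) • y ^ d else 0 := by
  have expand : ∑ k ∈ range d, (ζ ^ k) ^ (d - j) • (x + ζ ^ k • y) ^ d =
      ∑ m ∈ range (d + 1), ((d.choose m : K) * ∑ k ∈ range d, (ζ ^ (d - j + m)) ^ k) •
        (x ^ (d - m) * y ^ m) := by
    simp only [add_comm x, add_pow, smul_pow, Finset.smul_sum, mul_smul, Finset.mul_sum,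
      Finset.sum_smul]
    rw [Finset.sum_comm]
    refine Finset.sum_congr rfl fun m _ => Finset.sum_congr rfl fun k _ => ?_
    simp only [Algebra.smul_def, map_pow, map_natCast]
    ring
  have dvd_iff {m : ℕ} (hm : m < d) : d ∣ d - j + m ↔ m = j := by
    refine ⟨fun h => ?_, fun h => ⟨1, by omega⟩⟩
    have := Nat.eq_of_dvd_of_pos_of_lt_two_mul h (by omega) (by omega)
    omega
  have dvd_iff_last : d ∣ d - j + d ↔ j = 0 := by
    refine ⟨fun h => ?_, fun h => ⟨2, by omega⟩⟩
    by_contra hj0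
    have := Nat.eq_of_dvd_of_pos_of_lt_two_mul h (by omega) (by omega)
    omega
  rw [expand, Finset.sum_range_succ, Finset.sum_eq_single j]
  · rw [hζ.sum_pow_pow_of_dvd ((dvd_iff hj).mpr rfl), Nat.cast_mul]
    congr 1
    split_ifs with hj0
    · rw [hζ.sum_pow_pow_of_dvd (dvd_iff_last.mpr hj0), Nat.choose_self, Nat.sub_self, pow_zero,
        one_mul, Nat.cast_one, one_mul]
    · rw [hζ.sum_pow_pow_of_not_dvd (mt dvd_iff_last.mp hj0), mul_zero, zero_smul]
  · intro m hm hmj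
    rw [hζ.sum_pow_pow_of_not_dvd (mt (dvd_iff (mem_range.mp hm)).mp hmj), mul_zero, zero_smul]
  · exact fun h => absurd (mem_range.mpr hj) h

end IsPrimitiveRoot

theorem IsPrimitiveRoot.pow_mul_pow_add_ite_mem_span {K A : Type*} [Field K] [CharZero K]
    [CommRing A] [Algebra K A] {ζ : K} {d : ℕ} (hζ : IsPrimitiveRoot ζ d) (x y : A) {j : ℕ}
    (hj : j < d) :
    x ^ (d - j) * y ^ j + (if j = 0 then y ^ d else 0) ∈
      Submodule.span K (Set.range fun k : Fin d => (x + ζ ^ (k : ℕ) • y) ^ d) := by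
  have hc : ((d.choose j * d : ℕ) : K) ≠ 0 :=
    Nat.cast_ne_zero.mpr (mul_ne_zero (Nat.choose_pos hj.le).ne' (by omega))
  have key : ∑ k ∈ range d, (ζ ^ k) ^ (d - j) • (x + ζ ^ k • y) ^ d =
      ((d.choose j * d : ℕ) : K) • (x ^ (d - j) * y ^ j + if j = 0 then y ^ d else 0) := by
    rw [hζ.sum_pow_smul_add_smul_pow x y hj, smul_add]
    split_ifs with hj0
    · simp [hj0]
    · rw [smul_zero]
  rw [← inv_smul_smul₀ hc (x ^ (d - j) * y ^ j + if j = 0 then y ^ d else 0), ← key]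
  refine Submodule.smul_mem _ _ (Submodule.sum_mem _ fun k hk => Submodule.smul_mem _ _ ?_)
  exact Submodule.subset_span ⟨⟨k, mem_range.mp hk⟩, rfl⟩

theorem exists_sum_smul_pow_mul_pow_mem_span {A : Type*} [CommRing A] [Algebra ℂ A] (x y : A)
    {d : ℕ} (hd : d ≠ 0) {e : ℕ → ℂ} (he₀ : e 0 ≠ 0) (he : e d ≠ 0) :
    ∃ t : Fin d → ℂ, ∑ j ∈ range (d + 1), e j • (x ^ (d - j) * y ^ j) ∈
      Submodule.span ℂ (Set.range fun k => (x + t k • y) ^ d) := by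
  obtain ⟨r, hr⟩ := IsAlgClosed.exists_pow_nat_eq (e d / e 0) (Nat.pos_of_ne_zero hd)
  have hr₀ : r ≠ 0 := by
    rintro rfl
    exact div_ne_zero he he₀ (by rw [← hr, zero_pow hd])
  have hζ := Complex.isPrimitiveRoot_exp d hd
  set ζ := Complex.exp (2 * Real.pi * Complex.I / d)
  refine ⟨fun k => ζ ^ (k : ℕ) * r, ?_⟩
  have hsum : ∑ j ∈ range (d + 1), e j • (x ^ (d - j) * y ^ j) = ∑ j ∈ range d,
      (e j / r ^ j) • ((x ^ (d - j) * (r • y) ^ j) + if j = 0 then (r • y) ^ d else 0) := by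
    have hd₀ : 0 ∈ range d := mem_range.mpr (Nat.pos_of_ne_zero hd)
    simp only [smul_add, sum_add_distrib, smul_ite, smul_zero, sum_ite_eq', if_pos hd₀,
      sum_range_succ _ d, smul_pow, mul_smul_comm, smul_smul, pow_zero, div_one, hr,
      Nat.sub_self, one_mul]
    congr 1
    · exact sum_congr rfl fun j _ => by rw [div_mul_cancel₀ _ (pow_ne_zero j hr₀)]
    · rw [mul_div_cancel₀ _ he₀]
  rw [hsum]
  refine Submodule.sum_mem _ fun j hj => Submodule.smul_mem _ _ ?_
  simpa only [mul_smul] using hζ.pow_mul_pow_add_ite_mem_span x (r • y) (mem_range.mp hj)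

section Waring

variable {σ τ : Type*}

def HasWaringDecomposition (d r : ℕ) (P : MvPolynomial σ ℂ) : Prop :=
  ∃ L : Fin r → MvPolynomial σ ℂ, (∀ i, (L i).IsHomogeneous 1) ∧ P = ∑ i, L i ^ d

theorem waringRank_le {d r : ℕ} {P : MvPolynomial σ ℂ} (h : HasWaringDecomposition d r P) :
    waringRank d P ≤ r :=
  Nat.sInf_le h

theorem HasWaringDecomposition.bind₁ {d r : ℕ} {P : MvPolynomial σ ℂ}
    (h : HasWaringDecomposition d r P) {f : σ → MvPolynomial τ ℂ}
    (hf : ∀ i, (f i).IsHomogeneous 1) : HasWaringDecomposition d r (MvPolynomial.bind₁ f P) := by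
  obtain ⟨L, hL, rfl⟩ := h
  refine ⟨fun i => MvPolynomial.bind₁ f (L i), fun i => ?_, by simp⟩
  simpa using (hL i).aeval f hf

theorem HasWaringDecomposition.of_bind₁_linearSubst [Fintype σ] [DecidableEq σ] {d r : ℕ}
    {P : MvPolynomial σ ℂ} {N : Matrix σ σ ℂ} (hN : IsUnit N.det)
    (h : HasWaringDecomposition d r (MvPolynomial.bind₁ (linearSubst N) P)) :
    HasWaringDecomposition d r P := by
  have hP : MvPolynomial.bind₁ (linearSubst N⁻¹) (MvPolynomial.bind₁ (linearSubst N) P) = P := by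
    rw [bind₁_linearSubst_bind₁_linearSubst, Matrix.mul_nonsing_inv _ hN, linearSubst_one,
      bind₁_X_left, AlgHom.id_apply]
  exact hP ▸ h.bind₁ (isHomogeneous_linearSubst N⁻¹)

theorem hasWaringDecomposition_of_mem_span {d r : ℕ} (hd : d ≠ 0) {ℓ : Fin r → MvPolynomial σ ℂ}
    (hℓ : ∀ k, (ℓ k).IsHomogeneous 1) {P : MvPolynomial σ ℂ}
    (hP : P ∈ Submodule.span ℂ (Set.range fun k => ℓ k ^ d)) : HasWaringDecomposition d r P := by
  obtain ⟨c, rfl⟩ := Submodule.mem_span_range_iff_exists_fun ℂ |>.mp hP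
  choose z hz using fun k => IsAlgClosed.exists_pow_nat_eq (c k) (Nat.pos_of_ne_zero hd)
  refine ⟨fun k => z k • ℓ k, fun k => ?_, ?_⟩
  · simpa [smul_eq_C_mul] using (hℓ k).C_mul (z k)
  · simp only [smul_pow, hz]

theorem MvPolynomial.IsHomogeneous.hasWaringDecomposition_of_eval_ne_zero
    {F : MvPolynomial (Fin 2) ℂ} {d : ℕ} (hd : d ≠ 0) (hF : F.IsHomogeneous d)
    (h₀ : eval (Pi.single 0 1) F ≠ 0) (h₁ : eval (Pi.single 1 1) F ≠ 0) :
    HasWaringDecomposition d d F := by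
  rw [hF.eval_single_zero_one] at h₀
  rw [hF.eval_single_one_one] at h₁
  obtain ⟨t, ht⟩ := exists_sum_smul_pow_mul_pow_mem_span (X 0 : MvPolynomial (Fin 2) ℂ) (X 1) hd
    (e := fun j => coeff (Finsupp.single 0 (d - j) + Finsupp.single 1 j) F)
    (by simpa using h₀) (by simpa using h₁)
  rw [← hF.eq_sum_binary] at ht
  refine hasWaringDecomposition_of_mem_span hd (fun k => ?_) ht
  simpa [smul_eq_C_mul] using (isHomogeneous_X ℂ 0).add (isHomogeneous_C_mul_X (t k) 1)

end Waring

/-- A nonzero binary form of degree `d ≥ 1` has Waring rank at most `d`. -/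
theorem stmt5 (d : ℕ) (hd : 1 ≤ d)
    (F : MvPolynomial (Fin 2) ℂ) (hF0 : F ≠ 0) (hF : F.IsHomogeneous d) :
    waringRank d F ≤ d := by
  obtain ⟨N, hN, hNF⟩ := exists_isUnit_det_eval_col_ne_zero hF0
  have hG : (bind₁ (linearSubst N) F).IsHomogeneous d := by
    simpa using hF.aeval (linearSubst N) (isHomogeneous_linearSubst N)
  have hG₀ (j : Fin 2) : eval (Pi.single j 1) (bind₁ (linearSubst N) F) ≠ 0 := by
    rw [eval_bind₁_linearSubst, Matrix.mulVec_single_one]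
    exact hNF j
  exact waringRank_le <| .of_bind₁_linearSubst hN <|
    hG.hasWaringDecomposition_of_eval_ne_zero (by omega) (hG₀ 0) (hG₀ 1)
end

section
/- Let d > 1 and let F ∈ ℂ[x_0,x_1], G ∈ ℂ[y_0,y_1] be binary forms of degree d in disjoint pairs of variables with rk(F) = r and rk(G) = s, where s ≤ d − 1. Suppose F + G = H_1^d + ⋯ + H_t^d with t < r + s for linear forms H_i ∈ ℂ[x_0,x_1,y_0,y_1]. Then there is no 2-dimensional linear subspace W of the space of linear forms in x_0,x_1,y_0,y_1 such that W contains d pairwise non-proportional forms among the H_i and W has nonzero intersection with the span of y_0, y_1; equivalently, no line of ℙ^3 containing d of the points [H_i] meets the line ℙ(⟨y_0,y_1⟩). -/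
open MvPolynomial

/-!
Setting `y₀ = y₁ = 0` in `F + G = ∑ Hᵢ^d` gives `F = ∑ Hᵢ(x, 0)^d`. If the line `W` through `d` of
the `Hᵢ` contains a nonzero `ℓ ∈ ⟨y₀, y₁⟩`, then `W(x, 0)` is at most one-dimensional, so those `d`
summands are all multiples of one linear form and merge into a single `d`-th power. Hence
`r ≤ t - d + 1`, while `t < r + s ≤ r + d - 1`.
-/

namespace MvPolynomial

variable {σ τ R : Type*} [CommSemiring R]

noncomputable def zeroInr : MvPolynomial (σ ⊕ τ) R →ₐ[R] MvPolynomial σ R :=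
  aeval (Sum.elim X 0)

@[simp]
lemma zeroInr_X_inr (j : τ) : zeroInr (X (Sum.inr j) : MvPolynomial (σ ⊕ τ) R) = 0 := by
  simp [zeroInr]

@[simp]
lemma zeroInr_rename_inl (p : MvPolynomial σ R) :
    zeroInr (rename (Sum.inl : σ → σ ⊕ τ) p) = p := by
  rw [zeroInr, aeval_rename, Sum.elim_comp_inl, aeval_X_left_apply]

lemma zeroInr_rename_inr {p : MvPolynomial τ R} {n : ℕ} (hp : p.IsHomogeneous n) (hn : n ≠ 0) :
    zeroInr (rename (Sum.inr : τ → σ ⊕ τ) p) = 0 := by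
  have hc : constantCoeff p = 0 := by
    simpa [constantCoeff_eq] using hp.coeff_eq_zero (d := 0) (by simpa using hn.symm)
  rw [zeroInr, aeval_rename, Sum.elim_comp_inr, Pi.zero_def, aeval_zero', hc, map_zero]

lemma IsHomogeneous.zeroInr {p : MvPolynomial (σ ⊕ τ) R} {n : ℕ} (hp : p.IsHomogeneous n) :
    (zeroInr p).IsHomogeneous n := by
  have h := hp.aeval (Sum.elim X (0 : τ → MvPolynomial σ R)) (n := 1) fun i => by
    cases i <;> simp [isHomogeneous_X, isHomogeneous_zero]
  rwa [one_mul] at h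

end MvPolynomial

lemma finrank_map_lt_of_inf_ker_ne_bot {K V V₂ : Type*} [Field K] [AddCommGroup V] [Module K V]
    [AddCommGroup V₂] [Module K V₂] (f : V →ₗ[K] V₂) {W : Submodule K V} [FiniteDimensional K W]
    (h : W ⊓ LinearMap.ker f ≠ ⊥) : Module.finrank K (W.map f) < Module.finrank K W := by
  obtain ⟨ℓ, ⟨hℓW, hℓf⟩, hℓ⟩ := (Submodule.ne_bot_iff _).mp h
  have hker : 0 < Module.finrank K (LinearMap.ker (f.domRestrict W)) :=
    Module.finrank_pos_iff_exists_ne_zero.mpr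
      ⟨⟨⟨ℓ, hℓW⟩, by simpa using hℓf⟩, by simpa using hℓ⟩
  have := LinearMap.finrank_range_add_finrank_ker (f.domRestrict W)
  rw [LinearMap.range_domRestrict] at this
  omega

lemma exists_sum_pow_eq_pow_of_finrank_le_one {K A ι : Type*} [Field K] [IsAlgClosed K]
    [CommRing A] [Algebra K A] {U : Submodule K A} [Module.Finite K U]
    (hU : Module.finrank K U ≤ 1) (S : Finset ι) {v : ι → A} (hv : ∀ i ∈ S, v i ∈ U)
    {d : ℕ} (hd : 0 < d) : ∃ L ∈ U, ∑ i ∈ S, v i ^ d = L ^ d := by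
  obtain ⟨M, hM⟩ := finrank_le_one_iff.mp hU
  choose c hc using fun i (hi : i ∈ S) => hM ⟨v i, hv i hi⟩
  obtain ⟨b, hb⟩ := IsAlgClosed.exists_pow_nat_eq (∑ i ∈ S.attach, c i.1 i.2 ^ d) hd
  refine ⟨b • M, U.smul_mem b M.2, ?_⟩
  rw [smul_pow, hb, Finset.sum_smul, ← Finset.sum_attach]
  refine Finset.sum_congr rfl fun i _ => ?_
  rw [← smul_pow, ← Submodule.coe_smul, hc i.1 i.2]

variable {σ : Type*}

lemma waringRank_le_card {ι : Type*} [Fintype ι] {d : ℕ} {P : MvPolynomial σ ℂ}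
    (L : ι → MvPolynomial σ ℂ) (hL : ∀ i, (L i).IsHomogeneous 1) (hP : P = ∑ i, L i ^ d) :
    waringRank d P ≤ Fintype.card ι :=
  Nat.sInf_le ⟨L ∘ (Fintype.equivFin ι).symm, fun _ => hL _,
    hP.trans (Equiv.sum_comp _ fun i => L i ^ d).symm⟩

lemma waringRank_le_of_sum_pow_eq_pow {ι : Type*} [Fintype ι] [DecidableEq ι] {d : ℕ}
    {P : MvPolynomial σ ℂ} (L : ι → MvPolynomial σ ℂ) (hL : ∀ i, (L i).IsHomogeneous 1)
    (hP : P = ∑ i, L i ^ d) (S : Finset ι) {M : MvPolynomial σ ℂ} (hM : M.IsHomogeneous 1)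
    (hS : ∑ i ∈ S, L i ^ d = M ^ d) : waringRank d P ≤ Fintype.card ι - S.card + 1 := by
  have h := waringRank_le_card (d := d) (P := P) (ι := Option (Sᶜ : Finset ι))
    (fun o => o.elim M fun i => L i)
    (by rintro (_ | i); exacts [hM, hL i]) (by
      rw [Fintype.sum_option, hP, ← Finset.sum_add_sum_compl S, hS]
      exact congrArg (M ^ d + ·) (Finset.sum_coe_sort Sᶜ fun i => L i ^ d).symm)
  simpa [Finset.card_compl] using h

theorem stmt14_general (d r s t : ℕ) (hd : 1 < d)
    (F G : MvPolynomial (Fin 2) ℂ)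
    (hG : G.IsHomogeneous d)
    (hr : waringRank d F = r) (hsd : s ≤ d - 1)
    (H : Fin t → MvPolynomial (Fin 2 ⊕ Fin 2) ℂ)
    (hH1 : ∀ i, (H i).IsHomogeneous 1)
    (ht : t < r + s)
    (hsum : rename (Sum.inl : Fin 2 → Fin 2 ⊕ Fin 2) F +
        rename (Sum.inr : Fin 2 → Fin 2 ⊕ Fin 2) G = ∑ i, (H i) ^ d) :
    ¬ ∃ W : Submodule ℂ (MvPolynomial (Fin 2 ⊕ Fin 2) ℂ),
        Module.finrank ℂ W = 2 ∧
        (∃ S : Finset (Fin t), S.card = d ∧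
          (∀ i ∈ S, ∀ j ∈ S, i ≠ j → ¬ ∃ c : ℂ, H i = c • H j) ∧
          ∀ i ∈ S, H i ∈ W) ∧
        W ⊓ Submodule.span ℂ
            ({X (Sum.inr 0), X (Sum.inr 1)} : Set (MvPolynomial (Fin 2 ⊕ Fin 2) ℂ)) ≠
          ⊥ := by
  classical
  rintro ⟨W, hW2, ⟨S, hScard, -, hSW⟩, hmeet⟩
  have hF : F = ∑ i, zeroInr (H i) ^ d := by
    simpa [zeroInr_rename_inr hG (by omega)] using congrArg zeroInr hsum
  have : FiniteDimensional ℂ W := Module.finite_of_finrank_pos (by omega)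
  have hker : W ⊓ LinearMap.ker (zeroInr : MvPolynomial (Fin 2 ⊕ Fin 2) ℂ →ₐ[ℂ] _).toLinearMap
      ≠ ⊥ := by
    refine ne_bot_of_le_ne_bot hmeet (inf_le_inf_left W ?_)
    simp [Submodule.span_le, Set.insert_subset_iff]
  have hU := finrank_map_lt_of_inf_ker_ne_bot _ hker
  obtain ⟨M, ⟨-, hM⟩, hSM⟩ := exists_sum_pow_eq_pow_of_finrank_le_one
    (U := W.map zeroInr.toLinearMap ⊓ homogeneousSubmodule (Fin 2) ℂ 1)
    ((Submodule.finrank_mono inf_le_left).trans (by omega)) S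
    (fun i hi => ⟨Submodule.mem_map_of_mem (hSW i hi), (hH1 i).zeroInr⟩) (d := d) (by omega)
  have hrank := waringRank_le_of_sum_pow_eq_pow _ (fun i => (hH1 i).zeroInr) hF S hM hSM
  have hSt : S.card ≤ t := by simpa using S.card_le_univ
  rw [Fintype.card_fin] at hrank
  omega

/-- No 2-dimensional space of linear forms containing `d` pairwise non-proportional
summands `Hᵢ` can meet the span of the `y`-variables nontrivially. -/
theorem stmt14 (d r s t : ℕ) (hd : 1 < d)
    (F G : MvPolynomial (Fin 2) ℂ)
    (hF : F.IsHomogeneous d) (hG : G.IsHomogeneous d)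
    (hr : waringRank d F = r) (hs : waringRank d G = s) (hsd : s ≤ d - 1)
    (H : Fin t → MvPolynomial (Fin 2 ⊕ Fin 2) ℂ)
    (hH1 : ∀ i, (H i).IsHomogeneous 1)
    (ht : t < r + s)
    (hsum : rename (Sum.inl : Fin 2 → Fin 2 ⊕ Fin 2) F +
        rename (Sum.inr : Fin 2 → Fin 2 ⊕ Fin 2) G = ∑ i, (H i) ^ d) :
    ¬ ∃ W : Submodule ℂ (MvPolynomial (Fin 2 ⊕ Fin 2) ℂ),
        Module.finrank ℂ W = 2 ∧
        (∃ S : Finset (Fin t), S.card = d ∧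
          (∀ i ∈ S, ∀ j ∈ S, i ≠ j → ¬ ∃ c : ℂ, H i = c • H j) ∧
          ∀ i ∈ S, H i ∈ W) ∧
        W ⊓ Submodule.span ℂ
            ({X (Sum.inr 0), X (Sum.inr 1)} : Set (MvPolynomial (Fin 2 ⊕ Fin 2) ℂ)) ≠
          ⊥ :=
  stmt14_general d r s t hd F G hG hr hsd H hH1 ht hsum
end
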